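/- Let U ⊆ ℂ be open, K : U → ℝ smooth, and suppose G := ∂_z∂_{z̄}K is nowhere vanishing. Set Γ := G⁻¹·∂_zG and let C : U → ℂ be holomorphic and nowhere vanishing. Assume the one-dimensional special geometry relation ∂_{z̄}Γ = 2G − C·C̄·e^{2K}·G⁻² holds on U. Then the function Φ := ∂_zΓ + Γ² − 2Γ·∂_zK − 4·∂_z∂_zK + 2(∂_zK)² + (C′/C)·(2∂_zK − Γ) satisfies ∂_{z̄}Φ = 0 on U; that is, Φ is holomorphic. -/

import Mathlib

open Complex Filter Topology

/-- The Wirtinger derivative `∂_z f = (1/2)(∂_x f − i·∂_y f)`. -/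
noncomputable def wirtDz (f : ℂ → ℂ) : ℂ → ℂ :=
  fun z => (fderiv ℝ f z 1 - Complex.I * fderiv ℝ f z Complex.I) / 2

/-- The Wirtinger derivative `∂_z̄ f = (1/2)(∂_x f + i·∂_y f)`. -/
noncomputable def wirtDzbar (f : ℂ → ℂ) : ℂ → ℂ :=
  fun z => (fderiv ℝ f z 1 + Complex.I * fderiv ℝ f z Complex.I) / 2

/-!
Since `∂̄` commutes with `∂` on `C²` functions, applying `∂` to the special geometry relation
computes `∂̄∂Γ`, and `∂̄∂∂K = ∂G = GΓ` because `∂̄∂K = G`. As `C'/C` is holomorphic, the Leibniz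
rule expresses `∂̄Φ` through `G`, `Γ`, `∂K`, `∂̄Γ` and `|C|² e^{2K} G⁻²`; substituting the
relation for `∂̄Γ` once more, everything cancels.
-/

open scoped ContDiff ComplexConjugate

section WirtingerCalculus

variable {f g : ℂ → ℂ} {z : ℂ}

lemma wirtDz_congr_of_eventuallyEq (h : f =ᶠ[𝓝 z] g) : wirtDz f z = wirtDz g z := by
  simp only [wirtDz, h.fderiv_eq]

lemma wirtDz_const (c : ℂ) : wirtDz (fun _ => c) z = 0 := by
  simp [wirtDz]

lemma wirtDzbar_const (c : ℂ) : wirtDzbar (fun _ => c) z = 0 := by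
  simp [wirtDzbar]

lemma wirtDzbar_add (hf : DifferentiableAt ℝ f z) (hg : DifferentiableAt ℝ g z) :
    wirtDzbar (fun w => f w + g w) z = wirtDzbar f z + wirtDzbar g z := by
  simp only [wirtDzbar, fderiv_fun_add hf hg, add_apply]; ring

lemma wirtDz_sub (hf : DifferentiableAt ℝ f z) (hg : DifferentiableAt ℝ g z) :
    wirtDz (fun w => f w - g w) z = wirtDz f z - wirtDz g z := by
  simp only [wirtDz, fderiv_fun_sub hf hg, sub_apply]; ring

lemma wirtDzbar_sub (hf : DifferentiableAt ℝ f z) (hg : DifferentiableAt ℝ g z) :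
    wirtDzbar (fun w => f w - g w) z = wirtDzbar f z - wirtDzbar g z := by
  simp only [wirtDzbar, fderiv_fun_sub hf hg, sub_apply]; ring

lemma wirtDz_mul (hf : DifferentiableAt ℝ f z) (hg : DifferentiableAt ℝ g z) :
    wirtDz (fun w => f w * g w) z = wirtDz f z * g z + f z * wirtDz g z := by
  simp only [wirtDz, fderiv_fun_mul hf hg, add_apply, smul_apply, smul_eq_mul]; ring

lemma wirtDzbar_mul (hf : DifferentiableAt ℝ f z) (hg : DifferentiableAt ℝ g z) :
    wirtDzbar (fun w => f w * g w) z = wirtDzbar f z * g z + f z * wirtDzbar g z := by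
  simp only [wirtDzbar, fderiv_fun_mul hf hg, add_apply, smul_apply, smul_eq_mul]; ring

lemma DifferentiableAt.fderiv_real_apply (hf : DifferentiableAt ℂ f z) (v : ℂ) :
    fderiv ℝ f z v = deriv f z * v := by
  simp [hf.fderiv_restrictScalars ℝ, mul_comm]

lemma fderiv_real_comp_apply (hg : DifferentiableAt ℂ g (f z)) (hf : DifferentiableAt ℝ f z)
    (v : ℂ) : fderiv ℝ (fun w => g (f w)) z v = deriv g (f z) * fderiv ℝ f z v := by
  rw [fderiv_fun_comp z (hg.restrictScalars ℝ) hf, ContinuousLinearMap.comp_apply,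
    hg.fderiv_real_apply]

lemma wirtDz_comp (hg : DifferentiableAt ℂ g (f z)) (hf : DifferentiableAt ℝ f z) :
    wirtDz (fun w => g (f w)) z = deriv g (f z) * wirtDz f z := by
  simp only [wirtDz, fderiv_real_comp_apply hg hf]; ring

lemma wirtDzbar_comp (hg : DifferentiableAt ℂ g (f z)) (hf : DifferentiableAt ℝ f z) :
    wirtDzbar (fun w => g (f w)) z = deriv g (f z) * wirtDzbar f z := by
  simp only [wirtDzbar, fderiv_real_comp_apply hg hf]; ring

lemma wirtDz_pow (n : ℕ) (hf : DifferentiableAt ℝ f z) :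
    wirtDz (fun w => f w ^ n) z = n * f z ^ (n - 1) * wirtDz f z := by
  simp [wirtDz_comp (g := fun x => x ^ n) (differentiableAt_pow n) hf]

lemma wirtDzbar_pow (n : ℕ) (hf : DifferentiableAt ℝ f z) :
    wirtDzbar (fun w => f w ^ n) z = n * f z ^ (n - 1) * wirtDzbar f z := by
  simp [wirtDzbar_comp (g := fun x => x ^ n) (differentiableAt_pow n) hf]

lemma wirtDz_inv (hf : DifferentiableAt ℝ f z) (hz : f z ≠ 0) :
    wirtDz (fun w => (f w)⁻¹) z = -(f z ^ 2)⁻¹ * wirtDz f z := by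
  simp [wirtDz_comp (g := fun x => x⁻¹) (differentiableAt_inv hz) hf]

lemma wirtDz_cexp (hf : DifferentiableAt ℝ f z) :
    wirtDz (fun w => exp (f w)) z = exp (f z) * wirtDz f z := by
  simp [wirtDz_comp (g := exp) differentiableAt_exp hf]

lemma DifferentiableAt.wirtDz_eq_deriv (hf : DifferentiableAt ℂ f z) : wirtDz f z = deriv f z := by
  simp only [wirtDz, hf.fderiv_real_apply]
  linear_combination (-deriv f z / 2) * I_sq

lemma DifferentiableAt.wirtDzbar_eq_zero (hf : DifferentiableAt ℂ f z) : wirtDzbar f z = 0 := by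
  simp only [wirtDzbar, hf.fderiv_real_apply]
  linear_combination (deriv f z / 2) * I_sq

lemma wirtDz_conj : wirtDz (fun w => conj (f w)) z = conj (wirtDzbar f z) := by
  have : (fun w => conj (f w)) = fun w => star (f w) := rfl
  simp only [wirtDz, wirtDzbar, this, fderiv_star, ContinuousLinearMap.comp_apply,
    ContinuousLinearEquiv.coe_coe, starL'_apply, RCLike.star_def, map_div₀, map_add, map_mul,
    conj_I, map_ofNat]
  ring

lemma wirtDzbar_wirtDz_comm (hf : ContDiffAt ℝ 2 f z) :
    wirtDzbar (wirtDz f) z = wirtDz (wirtDzbar f) z := by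
  have hF : DifferentiableAt ℝ (fderiv ℝ f) z :=
    (hf.fderiv_right (m := 1) le_rfl).differentiableAt one_ne_zero
  have hsymm := hf.isSymmSndFDerivAt (by simp) 1 I
  unfold wirtDz wirtDzbar
  simp (disch := fun_prop) only [div_eq_mul_inv, fderiv_mul_const, fderiv_fun_sub, fderiv_fun_add,
    fderiv_const_mul, fderiv_clm_apply, fderiv_fun_const, Pi.zero_apply,
    ContinuousLinearMap.comp_zero, zero_add, smul_apply, sub_apply, add_apply,
    ContinuousLinearMap.flip_apply, smul_eq_mul]
  rw [hsymm]
  ring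

end WirtingerCalculus

section Smoothness

variable {f : ℂ → ℂ} {U : Set ℂ} {m n : WithTop ℕ∞}

lemma ContDiffOn.wirtDz (hf : ContDiffOn ℝ n f U) (hU : IsOpen U) (hmn : m + 1 ≤ n) :
    ContDiffOn ℝ m (wirtDz f) U := by
  have hF := hf.fderiv_of_isOpen hU hmn
  exact ((hF.clm_apply contDiffOn_const).sub
    (contDiffOn_const.mul (hF.clm_apply contDiffOn_const))).div_const 2

lemma ContDiffOn.wirtDzbar (hf : ContDiffOn ℝ n f U) (hU : IsOpen U) (hmn : m + 1 ≤ n) :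
    ContDiffOn ℝ m (wirtDzbar f) U := by
  have hF := hf.fderiv_of_isOpen hU hmn
  exact ((hF.clm_apply contDiffOn_const).add
    (contDiffOn_const.mul (hF.clm_apply contDiffOn_const))).div_const 2

end Smoothness

section Computations

variable {z : ℂ}

lemma wirtDzbar_wirtDz_of_eventuallyEq {f g : ℂ → ℂ} (hf : ContDiffAt ℝ 2 f z)
    (hfg : ∀ᶠ w in 𝓝 z, wirtDzbar f w = g w) : wirtDzbar (wirtDz f) z = wirtDz g z := by
  rw [wirtDzbar_wirtDz_comm hf, wirtDz_congr_of_eventuallyEq hfg]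

lemma wirtDz_special_geometry_rhs {C K G : ℂ → ℂ} (hC : DifferentiableAt ℂ C z)
    (hK : DifferentiableAt ℝ K z) (hG : DifferentiableAt ℝ G z) (hG0 : G z ≠ 0) :
    wirtDz (fun w => 2 * G w - C w * conj (C w) * exp (2 * K w) * (G w ^ 2)⁻¹) z =
      2 * wirtDz G z - (deriv C z * conj (C z)
        + C z * conj (C z) * (2 * wirtDz K z - 2 * wirtDz G z / G z)) * exp (2 * K z) * (G z ^ 2)⁻¹ := by
  have hCℝ := hC.restrictScalars ℝ
  have hCbar : DifferentiableAt ℝ (fun w => conj (C w)) z := hCℝ.star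
  have hG2 := pow_ne_zero 2 hG0
  simp (disch := first | assumption | fun_prop (disch := assumption)) only [wirtDz_sub,
    wirtDz_mul, wirtDz_const, wirtDz_inv, wirtDz_pow, wirtDz_cexp, wirtDz_conj,
    hC.wirtDz_eq_deriv, hC.wirtDzbar_eq_zero, map_zero]
  field_simp
  ring

lemma wirtDzbar_phi_expand {Γ K h : ℂ → ℂ} (hΓ : DifferentiableAt ℝ Γ z)
    (hDzΓ : DifferentiableAt ℝ (wirtDz Γ) z) (hDzK : DifferentiableAt ℝ (wirtDz K) z)
    (hDzDzK : DifferentiableAt ℝ (wirtDz (wirtDz K)) z) (hh : DifferentiableAt ℂ h z) :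
    wirtDzbar (fun w => wirtDz Γ w + Γ w ^ 2 - 2 * Γ w * wirtDz K w - 4 * wirtDz (wirtDz K) w
        + 2 * wirtDz K w ^ 2 + h w * (2 * wirtDz K w - Γ w)) z =
      wirtDzbar (wirtDz Γ) z + 2 * Γ z * wirtDzbar Γ z
        - 2 * (wirtDzbar Γ z * wirtDz K z + Γ z * wirtDzbar (wirtDz K) z)
        - 4 * wirtDzbar (wirtDz (wirtDz K)) z + 4 * wirtDz K z * wirtDzbar (wirtDz K) z
        + h z * (2 * wirtDzbar (wirtDz K) z - wirtDzbar Γ z) := by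
  have hh' := hh.restrictScalars ℝ
  simp (disch := fun_prop) only [wirtDzbar_add, wirtDzbar_sub, wirtDzbar_mul, wirtDzbar_pow,
    wirtDzbar_const, hh.wirtDzbar_eq_zero]
  ring

end Computations

theorem stmt_9_general (U : Set ℂ) (hUopen : IsOpen U)
    (K : ℂ → ℂ) (hKsmooth : ContDiffOn ℝ ((⊤ : ℕ∞) : WithTop ℕ∞) K U)
    (G Γ Φ : ℂ → ℂ)
    (hGdef : G = wirtDz (wirtDzbar K))
    (hGne : ∀ z ∈ U, G z ≠ 0)
    (hΓdef : Γ = fun z => (G z)⁻¹ * wirtDz G z)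
    (C : ℂ → ℂ) (hC : DifferentiableOn ℂ C U) (hCne : ∀ z ∈ U, C z ≠ 0)
    (hrel : ∀ z ∈ U,
      wirtDzbar Γ z =
        2 * G z - C z * (starRingEnd ℂ) (C z) * Complex.exp (2 * K z) * ((G z) ^ 2)⁻¹)
    (hΦdef : Φ = fun z =>
      wirtDz Γ z + (Γ z) ^ 2 - 2 * Γ z * wirtDz K z - 4 * wirtDz (wirtDz K) z
        + 2 * (wirtDz K z) ^ 2 + (deriv C z / C z) * (2 * wirtDz K z - Γ z)) :
    ∀ z ∈ U, wirtDzbar Φ z = 0 := by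
  have hDz {f : ℂ → ℂ} (hf : ContDiffOn ℝ ∞ f U) : ContDiffOn ℝ ∞ (wirtDz f) U :=
    hf.wirtDz hUopen (by simp)
  have hC2 {f : ℂ → ℂ} (hf : ContDiffOn ℝ ∞ f U) {w : ℂ} (hw : w ∈ U) : ContDiffAt ℝ 2 f w :=
    (hf.contDiffAt (hUopen.mem_nhds hw)).of_le (WithTop.coe_le_coe.2 le_top)
  have hG : ContDiffOn ℝ ∞ G U := hGdef ▸ hDz (hKsmooth.wirtDzbar hUopen (by simp))
  have hΓ : ContDiffOn ℝ ∞ Γ U := hΓdef ▸ (hG.inv hGne).mul (hDz hG)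
  have hKG : ∀ w ∈ U, wirtDzbar (wirtDz K) w = G w := fun w hw => by
    rw [wirtDzbar_wirtDz_comm (hC2 hKsmooth hw), hGdef]
  intro z hz
  have hzU := hUopen.mem_nhds hz
  have hd {f : ℂ → ℂ} (hf : ContDiffOn ℝ ∞ f U) : DifferentiableAt ℝ f z :=
    (hC2 hf hz).differentiableAt (by simp)
  have hGΓ : wirtDz G z = G z * Γ z := by
    rw [hΓdef, ← mul_assoc, mul_inv_cancel₀ (hGne z hz), one_mul]
  have dC : DifferentiableAt ℂ C z := hC.differentiableAt hzU
  have dlogC : DifferentiableAt ℂ (fun w => deriv C w / C w) z :=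
    ((hC.analyticOnNhd hUopen).deriv z hz).differentiableAt.div dC (hCne z hz)
  have hG0 := hGne z hz
  have hC0 := hCne z hz
  rw [hΦdef, wirtDzbar_phi_expand (hd hΓ) (hd (hDz hΓ)) (hd (hDz hKsmooth))
      (hd (hDz (hDz hKsmooth))) dlogC,
    wirtDzbar_wirtDz_of_eventuallyEq (hC2 hΓ hz) (eventually_of_mem hzU hrel),
    wirtDzbar_wirtDz_of_eventuallyEq (hC2 (hDz hKsmooth) hz) (eventually_of_mem hzU hKG),
    wirtDz_special_geometry_rhs dC (hd hKsmooth) (hd hG) hG0, hKG z hz, hrel z hz, hGΓ]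
  field_simp
  ring

/-- Let `K` be a smooth real-valued function on an open `U ⊆ ℂ` with
`G := ∂_z∂_z̄K` nowhere vanishing, `Γ := G⁻¹∂_zG`, and let `C` be holomorphic and nowhere
vanishing on `U`.  If the special geometry relation `∂_z̄Γ = 2G − C·C̄·e^{2K}·G⁻²` holds
on `U`, then `Φ := ∂_zΓ + Γ² − 2Γ∂_zK − 4∂_z∂_zK + 2(∂_zK)² + (C′/C)(2∂_zK − Γ)` is
holomorphic on `U`, i.e. `∂_z̄Φ = 0` on `U`. -/
theorem stmt_9 (U : Set ℂ) (hUopen : IsOpen U)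
    (K : ℂ → ℂ) (hKsmooth : ContDiffOn ℝ ((⊤ : ℕ∞) : WithTop ℕ∞) K U) (hKreal : ∀ z ∈ U, (K z).im = 0)
    (G Γ Φ : ℂ → ℂ)
    (hGdef : G = wirtDz (wirtDzbar K))
    (hGne : ∀ z ∈ U, G z ≠ 0)
    (hΓdef : Γ = fun z => (G z)⁻¹ * wirtDz G z)
    (C : ℂ → ℂ) (hC : DifferentiableOn ℂ C U) (hCne : ∀ z ∈ U, C z ≠ 0)
    (hrel : ∀ z ∈ U,
      wirtDzbar Γ z =
        2 * G z - C z * (starRingEnd ℂ) (C z) * Complex.exp (2 * K z) * ((G z) ^ 2)⁻¹)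
    (hΦdef : Φ = fun z =>
      wirtDz Γ z + (Γ z) ^ 2 - 2 * Γ z * wirtDz K z - 4 * wirtDz (wirtDz K) z
        + 2 * (wirtDz K z) ^ 2 + (deriv C z / C z) * (2 * wirtDz K z - Γ z)) :
    ∀ z ∈ U, wirtDzbar Φ z = 0 :=
  stmt_9_general U hUopen K hKsmooth G Γ Φ hGdef hGne hΓdef C hC hCne hrel hΦdef
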